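/- Let n ∈ {1, 3}, let p be an odd prime, and let α ≥ 1. Then there is no (p^α, n)-generalized bent function and there is no (2·p^α, n)-generalized bent function. -/

import Mathlib

/-- The primitive complex `m`-th root of unity `exp(2πi/m)`. -/
noncomputable def zetaC (m : ℕ) : ℂ := Complex.exp (2 * Real.pi * Complex.I / m)

/-- `f : (Fin n → ZMod 2) → ZMod m` is an `(m,n)`-generalized bent function if
`|∑_x ζ_m^{f x} (-1)^{y·x}|² = 2^n` for all `y`. -/
noncomputable def IsGBF (m n : ℕ) (f : (Fin n → ZMod 2) → ZMod m) : Prop :=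
  ∀ y : Fin n → ZMod 2,
    ‖(∑ x : Fin n → ZMod 2,
      zetaC m ^ (f x).val * (-1 : ℂ) ^ (∑ i : Fin n, (y i).val * (x i).val))‖ ^ 2
      = (2 : ℝ) ^ n

/-!
If `f` is an `(m, n)`-GBF then, by the Wiener–Khinchin identity for the Walsh transform, the
autocorrelation `∑ₓ ζ_m^(f x - f (x + d))` vanishes for every `d ≠ 0`.

For `m = p^α` this is a vanishing sum of `2^n` powers of a primitive `p^α`-th root of unity, so
`Φ_{p^α}` divides the corresponding integer polynomial and `p = Φ_{p^α}(1)` divides `2^n`.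

For `m = 2p^α`, `-ζ_m` is a primitive `p^α`-th root of unity, and the same argument shows that `p`
divides `B d = ∑ₓ (-1)^(f x + f (x + d))`. Since `B d` is even and `|B d| ≤ 2^n ≤ 8`, this forces
`3 ∣ B d` (for `p ≥ 5`, `B d = 0`). But `(∑ₓ (-1)^(f x))² = ∑_d B d ≡ B 0 = 2^n ≡ 2 (mod 3)`,
and `2` is not a square modulo `3`.
-/

open Finset Polynomial ComplexConjugate

section Walsh

variable {n : ℕ}

def bitDot (y x : Fin n → ZMod 2) : ℕ := ∑ i, (y i).val * (x i).val

def walsh (h : (Fin n → ZMod 2) → ℂ) (y : Fin n → ZMod 2) : ℂ :=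
  ∑ x, h x * (-1) ^ bitDot y x

theorem natCast_bitDot (y x : Fin n → ZMod 2) : (bitDot y x : ZMod 2) = ∑ i, y i * x i := by
  simp [bitDot]

theorem neg_one_pow_bitDot_add {R : Type*} [Monoid R] [HasDistribNeg R]
    (y a b : Fin n → ZMod 2) :
    (-1 : R) ^ bitDot y (a + b) = (-1) ^ bitDot y a * (-1) ^ bitDot y b := by
  rw [← pow_add]
  refine neg_one_pow_congr ?_
  simp only [← ZMod.natCast_eq_zero_iff_even, Nat.cast_add, natCast_bitDot, Pi.add_apply,
    mul_add, sum_add_distrib]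

theorem sum_neg_one_pow_val_mul_val (c : ZMod 2) :
    ∑ b : ZMod 2, (-1 : ℂ) ^ (b.val * c.val) = if c = 0 then 2 else 0 := by
  obtain rfl | rfl : c = 0 ∨ c = 1 := by decide +revert
  all_goals
    rw [show (univ : Finset (ZMod 2)) = {0, 1} from rfl, sum_pair zero_ne_one]
    norm_num [ZMod.val_one]

theorem sum_neg_one_pow_bitDot (c : Fin n → ZMod 2) :
    ∑ y, (-1 : ℂ) ^ bitDot y c = if c = 0 then 2 ^ n else 0 := by
  simp_rw [bitDot, ← prod_pow_eq_pow_sum]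
  rw [← Fintype.prod_sum fun i (b : ZMod 2) => (-1 : ℂ) ^ (b.val * (c i).val)]
  simp_rw [sum_neg_one_pow_val_mul_val, prod_ite_zero, funext_iff]
  simp

theorem sum_neg_one_pow_bitDot_mul_walsh_mul_conj (h : (Fin n → ZMod 2) → ℂ)
    (d : Fin n → ZMod 2) :
    ∑ y, (-1) ^ bitDot y d * (walsh h y * conj (walsh h y)) =
      2 ^ n * ∑ x, h x * conj (h (x + d)) := by
  have hsum_eq_zero : ∀ x x' : Fin n → ZMod 2, x + x' + d = 0 ↔ x' = x + d := fun x x' => by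
    rw [add_right_comm, add_comm, add_eq_zero_iff_eq_neg,
      show -(x + d) = x + d from funext fun i => ZMod.neg_eq_self_mod_two _]
  calc ∑ y, (-1) ^ bitDot y d * (walsh h y * conj (walsh h y))
      = ∑ x, ∑ x', h x * conj (h x') * ∑ y, (-1 : ℂ) ^ bitDot y (x + x' + d) := by
        simp_rw [walsh, map_sum, map_mul, map_pow, map_neg, map_one, sum_mul_sum, mul_sum,
          neg_one_pow_bitDot_add]
        rw [sum_comm]
        refine sum_congr rfl fun x _ => ?_
        rw [sum_comm]
        refine sum_congr rfl fun x' _ => ?_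
        refine sum_congr rfl fun y _ => ?_
        ring
    _ = ∑ x, h x * conj (h (x + d)) * 2 ^ n := by
        simp_rw [sum_neg_one_pow_bitDot, hsum_eq_zero, mul_ite, mul_zero, sum_ite_eq']
        simp
    _ = 2 ^ n * ∑ x, h x * conj (h (x + d)) := by rw [← sum_mul, mul_comm]

theorem walsh_autocorrelation_eq_zero {h : (Fin n → ZMod 2) → ℂ} {c : ℝ}
    (hh : ∀ y, ‖walsh h y‖ ^ 2 = c) {d : Fin n → ZMod 2} (hd : d ≠ 0) :
    ∑ x, h x * conj (h (x + d)) = 0 := by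
  have key := sum_neg_one_pow_bitDot_mul_walsh_mul_conj h d
  simp_rw [Complex.mul_conj, Complex.normSq_eq_norm_sq, hh, ← sum_mul,
    sum_neg_one_pow_bitDot, if_neg hd, zero_mul] at key
  exact (mul_eq_zero.mp key.symm).resolve_left (pow_ne_zero _ two_ne_zero)

end Walsh

theorem isPrimitiveRoot_zetaC {m : ℕ} (hm : m ≠ 0) : IsPrimitiveRoot (zetaC m) m :=
  Complex.isPrimitiveRoot_exp m hm

theorem conj_zetaC_pow {m k : ℕ} (hm : m ≠ 0) (hk : k ≤ m) :
    conj (zetaC m ^ k) = zetaC m ^ (m - k) := by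
  have hζ := isPrimitiveRoot_zetaC hm
  have hnorm : ‖zetaC m ^ k‖ = 1 := by
    rw [norm_pow, Complex.norm_eq_one_of_pow_eq_one hζ.pow_eq_one hm, one_pow]
  rw [← Complex.inv_eq_conj hnorm]
  exact inv_eq_of_mul_eq_one_left (by rw [← pow_add, Nat.sub_add_cancel hk, hζ.pow_eq_one])

theorem IsGBF.sum_zetaC_pow_eq_zero {m n : ℕ} (hm : m ≠ 0) {f : (Fin n → ZMod 2) → ZMod m}
    (hf : IsGBF m n f) {d : Fin n → ZMod 2} (hd : d ≠ 0) :
    ∑ x, zetaC m ^ ((f x).val + (m - (f (x + d)).val)) = 0 := by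
  have : NeZero m := ⟨hm⟩
  -- `hf` is, by definition, the statement that `‖walsh (zetaC m ^ (f ·).val) y‖ ^ 2 = 2 ^ n`
  have := walsh_autocorrelation_eq_zero (h := fun x => zetaC m ^ (f x).val) hf hd
  simpa only [conj_zetaC_pow hm (ZMod.val_lt _).le, ← pow_add] using this

namespace IsPrimitiveRoot

variable {K : Type*} [Field K] [CharZero K] {p k : ℕ} [Fact p.Prime] {z : K}

theorem prime_dvd_sum_of_sum_mul_pow_eq_zero (hz : IsPrimitiveRoot z (p ^ (k + 1)))
    {ι : Type*} (s : Finset ι) (c : ι → ℤ) (e : ι → ℕ)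
    (h : ∑ i ∈ s, (c i : K) * z ^ e i = 0) : (p : ℤ) ∣ ∑ i ∈ s, c i := by
  set P : ℤ[X] := ∑ i ∈ s, C (c i) * X ^ e i
  have hpos : 0 < p ^ (k + 1) := pow_pos (Fact.out : p.Prime).pos _
  obtain ⟨Q, hQ⟩ : minpoly ℤ z ∣ P :=
    minpoly.isIntegrallyClosed_dvd (hz.isIntegral hpos) (by simpa [P] using h)
  have hP1 : P.eval 1 = ∑ i ∈ s, c i := by simp [P, eval_finsetSum]
  rw [← hP1, hQ, ← cyclotomic_eq_minpoly hz hpos, eval_mul, eval_one_cyclotomic_prime_pow]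
  exact dvd_mul_right _ _

theorem prime_dvd_card_of_sum_pow_eq_zero (hz : IsPrimitiveRoot z (p ^ (k + 1)))
    {ι : Type*} (s : Finset ι) (e : ι → ℕ) (h : ∑ i ∈ s, z ^ e i = 0) : p ∣ #s := by
  have := hz.prime_dvd_sum_of_sum_mul_pow_eq_zero s 1 e (by simpa using h)
  exact_mod_cast (by simpa using this : (p : ℤ) ∣ #s)

theorem neg_of_odd {R : Type*} [CommRing R] [IsDomain R] {q : ℕ} (hq : Odd q) {z : R}
    (hz : IsPrimitiveRoot z (2 * q)) : IsPrimitiveRoot (-z) q := by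
  have hzq : z ^ q = -1 := by
    have := hz.pow_of_dvd hq.pos.ne' (dvd_mul_left q 2)
    rw [Nat.mul_div_cancel _ hq.pos] at this
    exact this.eq_neg_one_of_two_right
  refine ⟨by rw [neg_pow, hzq, hq.neg_one_pow, neg_one_mul, neg_neg], fun l hl => ?_⟩
  have : z ^ (2 * l) = 1 := by rw [pow_mul, ← neg_sq, ← pow_mul, mul_comm, pow_mul, hl, one_pow]
  exact Nat.dvd_of_mul_dvd_mul_left two_pos (hz.dvd_of_pow_eq_one _ this)

theorem prime_dvd_sum_neg_one_pow_of_sum_pow_eq_zero (hpodd : Odd p)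
    (hz : IsPrimitiveRoot z (2 * p ^ (k + 1))) {ι : Type*} (s : Finset ι) (e : ι → ℕ)
    (h : ∑ i ∈ s, z ^ e i = 0) : (p : ℤ) ∣ ∑ i ∈ s, (-1) ^ e i := by
  refine (hz.neg_of_odd hpodd.pow).prime_dvd_sum_of_sum_mul_pow_eq_zero s _ e ?_
  simpa [← neg_pow, neg_neg] using h

end IsPrimitiveRoot

theorem Fintype.sq_sum_eq_sum_sum_mul_add {G R : Type*} [AddGroup G] [Fintype G]
    [CommSemiring R] (g : G → R) : (∑ x, g x) ^ 2 = ∑ d, ∑ x, g x * g (x + d) := by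
  rw [sq, sum_mul_sum]
  conv_rhs => rw [sum_comm]
  exact Fintype.sum_congr _ _ fun x =>
    (Fintype.sum_equiv (Equiv.addLeft x) _ _ fun d => rfl).symm

section SignSums

variable {ι : Type*} (s : Finset ι) (e : ι → ℕ)

theorem abs_sum_neg_one_pow_le_card : |∑ i ∈ s, (-1 : ℤ) ^ e i| ≤ #s :=
  (abs_sum_le_sum_abs _ _).trans (by simp)

theorem even_sum_neg_one_pow_iff : Even (∑ i ∈ s, (-1 : ℤ) ^ e i) ↔ Even #s := by
  rw [← ZMod.intCast_eq_zero_iff_even, ← ZMod.natCast_eq_zero_iff_even]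
  push_cast
  simp [show (-1 : ZMod 2) = 1 from rfl]

theorem three_dvd_sum_neg_one_pow {p : ℕ} (hp : p.Prime) (hpodd : Odd p) (hs : Even #s)
    (hs8 : #s ≤ 8) (h : (p : ℤ) ∣ ∑ i ∈ s, (-1) ^ e i) : (3 : ℤ) ∣ ∑ i ∈ s, (-1) ^ e i := by
  rcases eq_or_ne p 3 with rfl | hp3
  · exact_mod_cast h
  have h2p : 2 * (p : ℤ) ∣ ∑ i ∈ s, (-1) ^ e i := by
    refine IsCoprime.mul_dvd ?_ ((even_sum_neg_one_pow_iff s e).mpr hs).two_dvd h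
    exact Int.isCoprime_iff_gcd_eq_one.mpr (Nat.coprime_two_left.mpr hpodd)
  have hp5 : 5 ≤ p := by
    have := hp.two_le
    rw [Nat.odd_iff] at hpodd
    omega
  have hlt : |∑ i ∈ s, (-1 : ℤ) ^ e i| < 2 * p :=
    (abs_sum_neg_one_pow_le_card s e).trans_lt (by omega)
  rw [Int.eq_zero_of_abs_lt_dvd h2p hlt]
  exact dvd_zero _

end SignSums

theorem sq_ne_two_pow_add_three_mul {n : ℕ} (hn : Odd n) (a c : ℤ) : a ^ 2 ≠ 2 ^ n + 3 * c := by
  intro h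
  obtain ⟨k, rfl⟩ := hn
  have h3 := congrArg (Int.cast : ℤ → ZMod 3) h
  have h2 : (2 : ZMod 3) ^ (2 * k + 1) = 2 := by
    rw [pow_succ, pow_mul, show (2 : ZMod 3) ^ 2 = 1 from rfl, one_pow, one_mul]
  push_cast at h3
  rw [h2, show (3 : ZMod 3) = 0 from rfl, zero_mul, add_zero] at h3
  revert h3
  generalize (a : ZMod 3) = u
  decide +revert

theorem not_isGBF_prime_pow {n p k : ℕ} (hn : n ≠ 0) (hp : p.Prime) (hpodd : Odd p)
    (f : (Fin n → ZMod 2) → ZMod (p ^ (k + 1))) : ¬ IsGBF (p ^ (k + 1)) n f := by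
  intro hf
  have : Fact p.Prime := ⟨hp⟩
  have : NeZero n := ⟨hn⟩
  have hm : p ^ (k + 1) ≠ 0 := pow_ne_zero _ hp.ne_zero
  obtain ⟨d, hd⟩ := exists_ne (0 : Fin n → ZMod 2)
  have hdvd : p ∣ 2 ^ n := by
    simpa using (isPrimitiveRoot_zetaC hm).prime_dvd_card_of_sum_pow_eq_zero univ _
      (hf.sum_zetaC_pow_eq_zero hm hd)
  rw [(Nat.prime_dvd_prime_iff_eq hp Nat.prime_two).mp (hp.dvd_of_dvd_pow hdvd)] at hpodd
  exact Nat.not_odd_iff_even.mpr even_two hpodd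

theorem not_isGBF_two_mul_prime_pow {n p k : ℕ} (hn : n = 1 ∨ n = 3) (hp : p.Prime)
    (hpodd : Odd p) (f : (Fin n → ZMod 2) → ZMod (2 * p ^ (k + 1))) :
    ¬ IsGBF (2 * p ^ (k + 1)) n f := by
  intro hf
  have : Fact p.Prime := ⟨hp⟩
  have hm : 2 * p ^ (k + 1) ≠ 0 := mul_ne_zero two_ne_zero (pow_ne_zero _ hp.ne_zero)
  have : NeZero (2 * p ^ (k + 1)) := ⟨hm⟩
  set B : (Fin n → ZMod 2) → ℤ := fun d => ∑ x, (-1) ^ ((f x).val + (f (x + d)).val)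
  have hcard : #(univ : Finset (Fin n → ZMod 2)) = 2 ^ n := by simp
  have h3B : ∀ d ≠ 0, (3 : ℤ) ∣ B d := by
    intro d hd
    have hpB := (isPrimitiveRoot_zetaC hm).prime_dvd_sum_neg_one_pow_of_sum_pow_eq_zero hpodd
      univ _ (hf.sum_zetaC_pow_eq_zero hm hd)
    have hBd : B d = ∑ x, (-1) ^ ((f x).val + (2 * p ^ (k + 1) - (f (x + d)).val)) := by
      refine sum_congr rfl fun x _ => neg_one_pow_congr ?_
      have := (f (x + d)).val_lt
      simp only [Nat.even_iff]
      omega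
    rw [hBd]
    refine three_dvd_sum_neg_one_pow _ _ hp hpodd ?_ ?_ hpB <;> rw [hcard] <;>
      rcases hn with rfl | rfl <;> decide
  have hsq : (∑ x, (-1 : ℤ) ^ (f x).val) ^ 2 = 2 ^ n + ∑ d ∈ univ.erase 0, B d := by
    have hB0 : B 0 = 2 ^ n := by simp [B, ← two_mul, pow_mul]
    rw [Fintype.sq_sum_eq_sum_sum_mul_add, ← add_sum_erase _ _ (mem_univ 0), ← hB0]
    simp [B, pow_add]
  obtain ⟨c, hc⟩ := dvd_sum fun d hd => h3B d (ne_of_mem_erase hd)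
  exact sq_ne_two_pow_add_three_mul (by rcases hn with rfl | rfl <;> decide) _ c (hc ▸ hsq)

theorem stmt_13 (n p α : ℕ) (hn : n = 1 ∨ n = 3)
    (hp : p.Prime) (hpodd : Odd p) (hα : 1 ≤ α) :
    (¬ ∃ f : (Fin n → ZMod 2) → ZMod (p ^ α), IsGBF (p ^ α) n f) ∧
    (¬ ∃ f : (Fin n → ZMod 2) → ZMod (2 * p ^ α), IsGBF (2 * p ^ α) n f) := by
  obtain ⟨k, rfl⟩ := Nat.exists_eq_add_of_le' hα
  exact ⟨fun ⟨f, hf⟩ => not_isGBF_prime_pow (by omega) hp hpodd f hf,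
    fun ⟨f, hf⟩ => not_isGBF_two_mul_prime_pow hn hp hpodd f hf⟩
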